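/- arXiv:1206.3408 — 3 statements merged into one kernel-verified Lean document; each statement's English description precedes it below -/
import Mathlib

section
/- Consider the FVS dictatorship gadget: a directed bipartite structure with a bit-vertex b_z for every z ∈ [k]^R and a test-vertex t_{x,S} for every x ∈ [k]^R and S ∈ [R]^{εR}, with arcs (b_z, t_{x,S}) whenever z ∈ C_{x,S} and arcs (t_{x,S}, b_z) whenever z ∈ C⊕_{x,S} = {z ⊕ 1 : z ∈ C_{x,S}} (⊕ is coordinatewise addition mod k). Let f(x) = x_s be a dictatorship. Partition bit-vertices into B_j = {b_x : x_s = j} and define the good test-vertices T_j = {t_{x,S} : s ∉ S and x_s = j} for j ∈ [k]. Then every test-vertex in T_j has all its incoming arcs from bit-vertices in B_j and all its outgoing arcs to bit-vertices in B_{j⊕1}. -/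
open Finset

/-- The sub-cube `C_{x,S} = {z : z_a = x_a for all a not appearing in S}`. -/
def Cube (k R m : ℕ) (x : Fin R → Fin k) (S : Fin m → Fin R) : Set (Fin R → Fin k) :=
  {z | ∀ a : Fin R, (∀ i, S i ≠ a) → z a = x a}

/-- `z ⊕ 1`: add `1 (mod k)` to every coordinate. -/
def shiftPt (k R : ℕ) [NeZero k] (z : Fin R → Fin k) : Fin R → Fin k := fun a => z a + 1

/-- In the FVS dictatorship gadget with dictator coordinate `s`, a good test-vertex
`t_{x,S}` with `s ∉ S` and `x_s = j` (i.e. `t_{x,S} ∈ T_j`) has all incoming arcs from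
bit-vertices `b_z` with `z_s = j` (i.e. in `B_j`) and all outgoing arcs to bit-vertices
`b_z` with `z_s = j ⊕ 1` (i.e. in `B_{j⊕1}`). -/
theorem stmt3 (k R m : ℕ) [NeZero k] (s : Fin R) (j : Fin k)
    (x : Fin R → Fin k) (S : Fin m → Fin R)
    (hgood : ∀ i, S i ≠ s) (hx : x s = j) :
    (∀ z ∈ Cube k R m x S, z s = j) ∧
    (∀ z ∈ shiftPt k R '' Cube k R m x S, z s = j + 1) := by
  constructor
  · intro z hz; rw [hz s hgood, hx]
  · rintro z ⟨w, hw, rfl⟩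
    simp [shiftPt, hw s hgood, hx]
end

section
/- In the FVS dictatorship gadget with dictatorship partition as above, for every j ∈ [k], the subgraph induced by the bit-vertices together with the good test-vertices in T_0 ∪ ... ∪ T_{k−1} minus T_j is acyclic (contains no directed cycle). -/
open Finset

/-- Bit-vertices of the FVS gadget. -/
abbrev BitV (k R : ℕ) := Fin R → Fin k

/-- Test-vertices of the FVS gadget: pairs `(x, S)`. -/
abbrev TestV (k R m : ℕ) := (Fin R → Fin k) × (Fin m → Fin R)

/-- Vertices of the FVS gadget. -/
abbrev GadV (k R m : ℕ) := BitV k R ⊕ TestV k R m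

/-- Arcs of the FVS gadget: `(b_z, t_{x,S})` for `z ∈ C_{x,S}` and
`(t_{x,S}, b_z)` for `z ∈ C⊕_{x,S}`. -/
def gadAdj (k R m : ℕ) [NeZero k] : GadV k R m → GadV k R m → Prop
  | Sum.inl z, Sum.inr t => z ∈ Cube k R m t.1 t.2
  | Sum.inr t, Sum.inl z => z ∈ shiftPt k R '' Cube k R m t.1 t.2
  | _, _ => False

/-- Kept vertices: all bit-vertices, plus good test-vertices (`s ∉ S`) outside `T_j`
(i.e. with `x_s ≠ j`). -/
def gadKeep (k R m : ℕ) (s : Fin R) (j : Fin k) : GadV k R m → Prop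
  | Sum.inl _ => True
  | Sum.inr t => (∀ i, t.2 i ≠ s) ∧ t.1 s ≠ j

/-!
Order the vertices by the cyclic distance of their `s`-coordinate from `j + 1`, test-vertices
just above the bit-vertices of their class. An arc `b_z → t_{x,S}` with `s ∉ S` keeps the
`s`-coordinate, and an arc `t_{x,S} → b_z` raises it by one, which increases the distance unless
`x_s = j`. Once `T_j` is removed every arc goes strictly up, so there is no cycle.
-/

theorem Relation.TransGen.lt_of_forall_lt {α β : Type*} [Preorder β] {r : α → α → Prop}
    {f : α → β} (hf : ∀ a b, r a b → f a < f b) {a b : α} (h : TransGen r a b) :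
    f a < f b := by
  simpa only [transGen_eq_self] using h.lift f hf

theorem Fin.val_add_one_sub_of_add_one_ne {k : ℕ} [NeZero k] {a b : Fin k} (h : a + 1 ≠ b) :
    ((a + 1 - b : Fin k) : ℕ) = (a - b : Fin k) + 1 := by
  rw [show a + 1 - b = a - b + 1 by abel]
  apply Fin.val_add_one_of_lt'
  by_contra hc
  have hlast : ((a - b : Fin k) : ℕ) + 1 = k := by have := (a - b).isLt; omega
  have hwrap : a - b + 1 = 0 := by
    ext
    rw [Fin.val_add, Fin.val_one', Nat.add_mod_mod, hlast, Nat.mod_self, Fin.val_zero]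
  exact h (sub_eq_zero.mp (by rw [← hwrap]; abel))

section Gadget

variable {k R m : ℕ} [NeZero k]

def gadRank (s : Fin R) (j : Fin k) : GadV k R m → ℕ
  | Sum.inl z => 2 * (z s - (j + 1) : Fin k)
  | Sum.inr t => 2 * (t.1 s - (j + 1) : Fin k) + 1

theorem gadRank_lt_of_gadAdj {s : Fin R} {j : Fin k} {u w : GadV k R m}
    (hadj : gadAdj k R m u w) (hu : gadKeep k R m s j u) (hw : gadKeep k R m s j w) :
    gadRank s j u < gadRank s j w := by
  match u, w with
  | Sum.inl z, Sum.inr t =>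
    have hzs : z s = t.1 s := hadj s hw.1
    simp only [gadRank, hzs]
    omega
  | Sum.inr t, Sum.inl _ =>
    obtain ⟨z, hz, rfl⟩ := hadj
    have hzs : shiftPt k R z s = t.1 s + 1 := by simp only [shiftPt, hz s hu.1]
    have hstep := Fin.val_add_one_sub_of_add_one_ne (b := j + 1) (add_left_injective 1 |>.ne hu.2)
    simp only [gadRank, hzs, hstep]
    omega
  | Sum.inl _, Sum.inl _ | Sum.inr _, Sum.inr _ => exact hadj.elim

end Gadget

/-- In the FVS dictatorship gadget, for every `j ∈ [k]`, the subgraph induced by the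
bit-vertices together with the good test-vertices `(T_0 ∪ ⋯ ∪ T_{k-1}) \ T_j`
is acyclic. -/
theorem stmt4 (k R m : ℕ) [NeZero k] (s : Fin R) (j : Fin k) :
    ∀ v : GadV k R m,
      ¬ Relation.TransGen
          (fun u w => gadAdj k R m u w ∧ gadKeep k R m s j u ∧ gadKeep k R m s j w)
          v v := fun _ hcycle =>
  lt_irrefl _ <| hcycle.lt_of_forall_lt fun _ _ ⟨hadj, hu, hw⟩ =>
    gadRank_lt_of_gadAdj (s := s) (j := j) hadj hu hw
end

section
/- Let σ be a topological ordering of a finite DAG containing bit-vertices {b_z : z ∈ [k]^R} and a surviving test-vertex t_{x,S} that has an arc from every b_z with z ∈ C_{x,S} and an arc to every b_z with z ∈ C⊕_{x,S}. Let A be any down-closed half of bit-vertices under σ (i.e., A = set of bit-vertices b with σ(b) > σ(b*) for a fixed threshold bit-vertex b*), and let f_A be the indicator function of {z : b_z ∈ A}. Then either f_A ≡ 0 on C_{x,S}, or f_A ≡ 1 on C⊕_{x,S}. -/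
open Finset

/-- Let `σ` be a topological ordering of a DAG containing bit-vertices `b_z` and a
surviving test-vertex `t` with arcs from every `b_z`, `z ∈ C_{x,S}`, and to every `b_z`,
`z ∈ C⊕_{x,S}`. For `A` the down-closed half `{z : σ(b_z) > θ}` with threshold
`θ = σ(b_{z₀})` and `f_A` its indicator, either `f_A ≡ 0` on `C_{x,S}` or `f_A ≡ 1`
on `C⊕_{x,S}`. -/
theorem stmt10 {V : Type*} (k R m : ℕ) [NeZero k] (Adj : V → V → Prop)
    (σ : V → ℕ) (hσinj : Function.Injective σ)
    (hσ : ∀ u v, Adj u v → σ u < σ v)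
    (b : (Fin R → Fin k) → V) (t : V) (x : Fin R → Fin k) (S : Fin m → Fin R)
    (hin : ∀ z ∈ Cube k R m x S, Adj (b z) t)
    (hout : ∀ z ∈ shiftPt k R '' Cube k R m x S, Adj t (b z))
    (θ : ℕ) (z₀ : Fin R → Fin k) (hθ : θ = σ (b z₀))
    (fA : (Fin R → Fin k) → ℕ) (hfA : ∀ z, fA z = if θ < σ (b z) then 1 else 0) :
    (∀ z ∈ Cube k R m x S, fA z = 0) ∨
    (∀ z ∈ shiftPt k R '' Cube k R m x S, fA z = 1) := by
  by_cases h : σ t ≤ θ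
  · left
    intro z hz
    rw [hfA]
    have := hσ _ _ (hin z hz)
    simp [not_lt.2 (le_of_lt (lt_of_lt_of_le this h))]
  · right
    intro z hz
    rw [hfA]
    have := hσ _ _ (hout z hz)
    simp [lt_trans (not_le.1 h) this]
end
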